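/- arXiv:2404.09358 — 2 statements merged into one kernel-verified Lean document; each statement's English description precedes it below -/
import Mathlib

section
/- Neyman orthogonality for the partially linear model: under the model Y = Xᵀβ₀ + g₀(S) + U, X = m₀(S) + V with E[U | X, S] = 0 and E[V | S] = 0, the Gateaux derivative at η₀ = (ℓ₀, m₀) of η ↦ E[ψ(W; β₀, η)] in any direction η − η₀ is zero, where ψ(W; β, η) = (Y − ℓ(S) − (X − m(S))ᵀβ)(X − m(S)) and ℓ₀(S) = E[Y|S]. -/
/-!
Along the path `η₀ + r (η - η₀)` the residual is `U + r b(S)` and the centred regressor is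
`V - r Δm(S)`, where `Δm = m - m₀` and `b = Δmᵀβ₀ - (ℓ - ℓ₀)`. The expected score is therefore
quadratic in `r`, and its linear coefficient `E[b(S) V] - E[Δm(S) U]` vanishes because `V` is
mean-independent of `S` and `U` of `(X, S)`.
-/

open MeasureTheory

theorem integral_comp_mul_eq_zero_of_condExp_comap_eq_zero {Ω β : Type*} [MeasurableSpace Ω]
    [MeasurableSpace β] {P : Measure Ω} [IsFiniteMeasure P] {Z : Ω → β} (hZ : Measurable Z)
    {h : β → ℝ} (hh : Measurable h) {g : Ω → ℝ} (hg : Integrable g P)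
    (hhg : Integrable (fun ω => h (Z ω) * g ω) P)
    (hcond : P[g | MeasurableSpace.comap Z inferInstance] =ᵐ[P] 0) :
    ∫ ω, h (Z ω) * g ω ∂P = 0 := by
  have hpull : P[(h ∘ Z) * g | MeasurableSpace.comap Z inferInstance]
      =ᵐ[P] (h ∘ Z) * P[g | MeasurableSpace.comap Z inferInstance] :=
    condExp_mul_of_stronglyMeasurable_left
      (hh.comp (comap_measurable Z)).stronglyMeasurable hhg hg
  calc ∫ ω, h (Z ω) * g ω ∂P
      = ∫ ω, P[(h ∘ Z) * g | MeasurableSpace.comap Z inferInstance] ω ∂P :=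
        (integral_condExp hZ.comap_le).symm
    _ = 0 := by
        rw [integral_congr_ae (hpull.trans (Filter.EventuallyEq.rfl.mul hcond))]
        simp

theorem integral_add_mul_mul_sub_mul_of_orthogonal {Ω : Type*} [MeasurableSpace Ω]
    {P : Measure Ω} {u v b δ : Ω → ℝ} (hu : MemLp u 2 P) (hv : MemLp v 2 P)
    (hb : MemLp b 2 P) (hδ : MemLp δ 2 P)
    (hbv : ∫ ω, b ω * v ω ∂P = 0) (hδu : ∫ ω, δ ω * u ω ∂P = 0) (r : ℝ) :
    ∫ ω, (u ω + r * b ω) * (v ω - r * δ ω) ∂P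
      = ∫ ω, u ω * v ω ∂P - r ^ 2 * ∫ ω, b ω * δ ω ∂P := by
  have hexpand : ∀ ω, (u ω + r * b ω) * (v ω - r * δ ω)
      = (u ω * v ω + r * (b ω * v ω) - r * (δ ω * u ω)) - r ^ 2 * (b ω * δ ω) :=
    fun ω => by ring
  have huv_int : Integrable (fun ω => u ω * v ω) P := hu.integrable_mul hv
  have hbv_int : Integrable (fun ω => b ω * v ω) P := hb.integrable_mul hv
  have hδu_int : Integrable (fun ω => δ ω * u ω) P := hδ.integrable_mul hu
  have hbδ_int : Integrable (fun ω => b ω * δ ω) P := hb.integrable_mul hδ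
  simp only [hexpand]
  rw [integral_sub (by fun_prop) (by fun_prop), integral_sub (by fun_prop) (by fun_prop),
    integral_add huv_int (by fun_prop), integral_const_mul, integral_const_mul, integral_const_mul,
    hbv, hδu]
  ring

theorem deriv_toLp_sub_sq_mul_eq_zero {ι : Type*} [Fintype ι] (a c : ι → ℝ) :
    deriv (fun r : ℝ => (WithLp.toLp 2 fun j => a j - r ^ 2 * c j : EuclideanSpace ℝ ι)) 0
      = 0 := by
  have hquadratic : (fun r : ℝ => (WithLp.toLp 2 fun j => a j - r ^ 2 * c j : EuclideanSpace ℝ ι))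
      = fun r : ℝ => WithLp.toLp 2 a - r ^ 2 • WithLp.toLp 2 c := by
    funext r
    ext j
    simp
  rw [hquadratic]
  simpa using
    (((hasDerivAt_pow 2 (0 : ℝ)).smul_const (WithLp.toLp 2 c : EuclideanSpace ℝ ι)).const_sub
      (WithLp.toLp 2 a)).deriv

theorem partiallyLinear_score_eq {ι : Type*} [Fintype ι] {x v m₀ : ι → ℝ} {y u g ℓ₀ : ℝ}
    {β : ι → ℝ} (hx : ∀ k, x k = m₀ k + v k) (hy : y = ∑ k, x k * β k + g + u)
    (hℓ₀ : ℓ₀ = ∑ k, m₀ k * β k + g) (ℓ : ℝ) (m : ι → ℝ) (r : ℝ) (j : ι) :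
    (y - (ℓ₀ + r * (ℓ - ℓ₀)) - ∑ k, (x k - (m₀ k + r * (m k - m₀ k))) * β k)
        * (x j - (m₀ j + r * (m j - m₀ j)))
      = (u + r * (∑ k, (m k - m₀ k) * β k - (ℓ - ℓ₀))) * (v j - r * (m j - m₀ j)) := by
  simp only [hy, hℓ₀, hx, add_mul, sub_mul, mul_sub, mul_assoc, ← Finset.mul_sum,
    Finset.sum_add_distrib, Finset.sum_sub_distrib]
  ring

/-- Neyman orthogonality for the partially linear model: under
`Y = Xᵀβ₀ + g₀(S) + U`, `X = m₀(S) + V` with `E[U ∣ X, S] = 0` and `E[V ∣ S] = 0`,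
the Gateaux derivative at `η₀ = (ℓ₀, m₀)` of `η ↦ E[ψ(W; β₀, η)]` in any direction
`η − η₀` is zero, where `ψ(W; β, η) = (Y − ℓ(S) − (X − m(S))ᵀβ)(X − m(S))` and
`ℓ₀(S) = E[Y ∣ S] = m₀(S)ᵀβ₀ + g₀(S)`. -/
theorem stmt_10 {Ω : Type*} [MeasurableSpace Ω] (P : Measure Ω) [IsProbabilityMeasure P]
    (p d : ℕ) (Y U : Ω → ℝ) (X V : Ω → Fin p → ℝ) (S : Ω → Fin d → ℝ)
    (g₀ ℓ₀ ℓ : (Fin d → ℝ) → ℝ) (m₀ m : (Fin d → ℝ) → Fin p → ℝ) (β₀ : Fin p → ℝ)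
    (hmodelY : ∀ ω, Y ω = (∑ j, X ω j * β₀ j) + g₀ (S ω) + U ω)
    (hmodelX : ∀ ω j, X ω j = m₀ (S ω) j + V ω j)
    (hℓ₀ : ∀ s, ℓ₀ s = (∑ j, m₀ s j * β₀ j) + g₀ s)
    (hXmeas : Measurable X) (hSmeas : Measurable S)
    (hℓmeas : Measurable ℓ) (hℓ₀meas : Measurable ℓ₀)
    (hmmeas : Measurable m) (hm₀meas : Measurable m₀)
    (hUcond : P[U | MeasurableSpace.comap (fun ω => (X ω, S ω)) inferInstance] =ᵐ[P] 0)
    (hVcond : ∀ j, P[(fun ω => V ω j) | MeasurableSpace.comap S inferInstance] =ᵐ[P] 0)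
    (hUL2 : MemLp U 2 P) (hVL2 : ∀ j, MemLp (fun ω => V ω j) 2 P)
    (hℓL2 : MemLp (fun ω => ℓ (S ω)) 2 P) (hℓ₀L2 : MemLp (fun ω => ℓ₀ (S ω)) 2 P)
    (hmL2 : ∀ j, MemLp (fun ω => m (S ω) j) 2 P)
    (hm₀L2 : ∀ j, MemLp (fun ω => m₀ (S ω) j) 2 P) :
    deriv (fun r : ℝ => (WithLp.toLp 2 (fun j => ∫ ω,
        (Y ω - (ℓ₀ (S ω) + r * (ℓ (S ω) - ℓ₀ (S ω)))
          - ∑ k, (X ω k - (m₀ (S ω) k + r * (m (S ω) k - m₀ (S ω) k))) * β₀ k)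
        * (X ω j - (m₀ (S ω) j + r * (m (S ω) j - m₀ (S ω) j))) ∂P) :
        EuclideanSpace ℝ (Fin p))) 0 = 0 := by
  set Δm : (Fin d → ℝ) → Fin p → ℝ := fun s j => m s j - m₀ s j
  set b : (Fin d → ℝ) → ℝ := fun s => ∑ k, Δm s k * β₀ k - (ℓ s - ℓ₀ s)
  have hscore : ∀ r ω j,
      (Y ω - (ℓ₀ (S ω) + r * (ℓ (S ω) - ℓ₀ (S ω)))
          - ∑ k, (X ω k - (m₀ (S ω) k + r * (m (S ω) k - m₀ (S ω) k))) * β₀ k)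
        * (X ω j - (m₀ (S ω) j + r * (m (S ω) j - m₀ (S ω) j)))
      = (U ω + r * b (S ω)) * (V ω j - r * Δm (S ω) j) := fun r ω j =>
    partiallyLinear_score_eq (hmodelX ω) (hmodelY ω) (hℓ₀ (S ω)) _ _ r j
  have hΔm_meas : ∀ j, Measurable fun s => Δm s j := fun j =>
    ((measurable_pi_apply j).comp hmmeas).sub ((measurable_pi_apply j).comp hm₀meas)
  have hb_meas : Measurable b :=
    (Finset.measurable_sum _ fun k _ => (hΔm_meas k).mul_const _).sub (hℓmeas.sub hℓ₀meas)
  have hΔmL2 : ∀ j, MemLp (fun ω => Δm (S ω) j) 2 P := fun j => (hmL2 j).sub (hm₀L2 j)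
  have hbL2 : MemLp (fun ω => b (S ω)) 2 P :=
    (memLp_finsetSum _ fun k _ => (hΔmL2 k).mul_const (β₀ k)).sub (hℓL2.sub hℓ₀L2)
  have hV_perp : ∀ j, ∫ ω, b (S ω) * V ω j ∂P = 0 := fun j =>
    integral_comp_mul_eq_zero_of_condExp_comap_eq_zero hSmeas hb_meas
      ((hVL2 j).integrable one_le_two) (hbL2.integrable_mul (hVL2 j)) (hVcond j)
  have hU_perp : ∀ j, ∫ ω, Δm (S ω) j * U ω ∂P = 0 := fun j =>
    integral_comp_mul_eq_zero_of_condExp_comap_eq_zero (hXmeas.prodMk hSmeas)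
      (h := fun z => Δm z.2 j) ((hΔm_meas j).comp measurable_snd)
      (hUL2.integrable one_le_two) ((hΔmL2 j).integrable_mul hUL2) hUcond
  have hcomponent : ∀ r j, ∫ ω, (U ω + r * b (S ω)) * (V ω j - r * Δm (S ω) j) ∂P
      = ∫ ω, U ω * V ω j ∂P - r ^ 2 * ∫ ω, b (S ω) * Δm (S ω) j ∂P := fun r j =>
    integral_add_mul_mul_sub_mul_of_orthogonal hUL2 (hVL2 j) hbL2 (hΔmL2 j) (hV_perp j)
      (hU_perp j) r
  simp only [hscore, hcomponent]
  exact deriv_toLp_sub_sq_mul_eq_zero _ _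
end

section
/- Second-derivative bound: for f(r) = E[ψ(W; β₀, η₀ + r(η − η₀))] with ψ(W; β, η) = (Y − ℓ(S) − (X − m(S))ᵀβ)(X − m(S)), the second derivative in r equals 2E[(ℓ(S) − ℓ₀(S))(m(S) − m₀(S))] − 2E[(m(S) − m₀(S))(m(S) − m₀(S))ᵀ β₀], independent of r. -/
/-!
Along the segment `η₀ + r (η - η₀)` both factors of `ψ` are affine in `r`: the integrand is
`(A - r B) (C - r D)` with `B = (ℓ - ℓ₀) - (m - m₀)ᵀ β₀` and `D = m - m₀`. All of `A, B, C, D`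
are in `L²`, so by Hölder every coefficient of the expansion is integrable and `f` is a quadratic
polynomial in `r` with leading coefficient `E[B D]`; hence `f'' = 2 E[B D]`.
-/

open MeasureTheory

section Quadratic

variable {𝕜 E : Type*} [NontriviallyNormedField 𝕜] [NormedAddCommGroup E] [NormedSpace 𝕜 E]

theorem iteratedDeriv_two_sub_smul_add_sq_smul (a b c : E) (r : 𝕜) :
    iteratedDeriv 2 (fun s : 𝕜 => a - s • b + s ^ 2 • c) r = (2 : 𝕜) • c := by
  have hderiv : deriv (fun s : 𝕜 => a - s • b + s ^ 2 • c) = fun s => -b + (2 * s) • c := by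
    funext s
    have h : HasDerivAt (fun s : 𝕜 => a - s • b + s ^ 2 • c)
        (0 - (1 : 𝕜) • b + ((2 : ℕ) * s ^ (2 - 1)) • c) s :=
      ((hasDerivAt_const s a).sub ((hasDerivAt_id s).smul_const b)).add
        ((hasDerivAt_pow 2 s).smul_const c)
    rw [h.deriv]
    simp
  have hderiv2 : HasDerivAt (fun s : 𝕜 => -b + (2 * s) • c) (0 + (2 * 1 : 𝕜) • c) r :=
    (hasDerivAt_const r (-b)).add (((hasDerivAt_id r).const_mul (2 : 𝕜)).smul_const c)
  rw [iteratedDeriv_succ, iteratedDeriv_one, hderiv, hderiv2.deriv, zero_add, mul_one]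

end Quadratic

section Integral

variable {Ω : Type*} [MeasurableSpace Ω] {P : Measure Ω}

theorem integral_sub_mul_mul_sub_mul {A B C D : Ω → ℝ} (hA : MemLp A 2 P) (hB : MemLp B 2 P)
    (hC : MemLp C 2 P) (hD : MemLp D 2 P) (r : ℝ) :
    ∫ ω, (A ω - r * B ω) * (C ω - r * D ω) ∂P
      = ∫ ω, A ω * C ω ∂P - r * ∫ ω, B ω * C ω + A ω * D ω ∂P
        + r ^ 2 * ∫ ω, B ω * D ω ∂P := by
  have hAC : Integrable (fun ω => A ω * C ω) P := hA.integrable_mul hC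
  have hlin : Integrable (fun ω => r * (B ω * C ω + A ω * D ω)) P :=
    ((hB.integrable_mul hC).add (hA.integrable_mul hD)).const_mul r
  have hquad : Integrable (fun ω => r ^ 2 * (B ω * D ω)) P :=
    (hB.integrable_mul hD).const_mul (r ^ 2)
  calc ∫ ω, (A ω - r * B ω) * (C ω - r * D ω) ∂P
      = ∫ ω, A ω * C ω - r * (B ω * C ω + A ω * D ω) + r ^ 2 * (B ω * D ω) ∂P := by
        congr 1; funext ω; ring
    _ = _ := by
        rw [integral_add (hAC.sub hlin : Integrable (fun ω => _ - _) P) hquad,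
          integral_sub hAC hlin, integral_const_mul, integral_const_mul]

theorem iteratedDeriv_two_integral_sub_mul_mul_sub_mul {ι : Type*} [Fintype ι] {A B : Ω → ℝ}
    {C D : ι → Ω → ℝ} (hA : MemLp A 2 P) (hB : MemLp B 2 P) (hC : ∀ i, MemLp (C i) 2 P)
    (hD : ∀ i, MemLp (D i) 2 P) (r : ℝ) :
    iteratedDeriv 2 (fun r : ℝ => (WithLp.toLp 2
        (fun i => ∫ ω, (A ω - r * B ω) * (C i ω - r * D i ω) ∂P) : EuclideanSpace ℝ ι)) r
      = (2 : ℝ) • WithLp.toLp 2 (fun i => ∫ ω, B ω * D i ω ∂P) := by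
  have hquadratic : (fun r : ℝ => (WithLp.toLp 2
        (fun i => ∫ ω, (A ω - r * B ω) * (C i ω - r * D i ω) ∂P) : EuclideanSpace ℝ ι))
      = fun r : ℝ => WithLp.toLp 2 (fun i => ∫ ω, A ω * C i ω ∂P)
          - r • WithLp.toLp 2 (fun i => ∫ ω, B ω * C i ω + A ω * D i ω ∂P)
          + r ^ 2 • WithLp.toLp 2 (fun i => ∫ ω, B ω * D i ω ∂P) := by
    funext r
    ext i
    exact integral_sub_mul_mul_sub_mul hA hB (hC i) (hD i) r
  rw [hquadratic, iteratedDeriv_two_sub_smul_add_sq_smul]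

end Integral

theorem residual_along_segment_eq {ι : Type*} [Fintype ι] (y l₀ l : ℝ) (x m₀ m β : ι → ℝ)
    (r : ℝ) :
    y - (l₀ + r * (l - l₀)) - ∑ k, (x k - (m₀ k + r * (m k - m₀ k))) * β k
      = y - l₀ - ∑ k, (x k - m₀ k) * β k - r * (l - l₀ - ∑ k, (m k - m₀ k) * β k) := by
  have hsum : ∑ k, (x k - (m₀ k + r * (m k - m₀ k))) * β k
      = ∑ k, (x k - m₀ k) * β k - r * ∑ k, (m k - m₀ k) * β k := by
    rw [Finset.mul_sum, ← Finset.sum_sub_distrib]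
    exact Finset.sum_congr rfl fun k _ => by ring
  rw [hsum]
  ring

theorem stmt_13_general {Ω : Type*} [MeasurableSpace Ω] (P : Measure Ω)
    (p d : ℕ) (Y : Ω → ℝ) (X : Ω → Fin p → ℝ) (S : Ω → Fin d → ℝ)
    (ℓ₀ ℓ : (Fin d → ℝ) → ℝ) (m₀ m : (Fin d → ℝ) → Fin p → ℝ) (β₀ : Fin p → ℝ)
    (hYL2 : MemLp Y 2 P) (hXL2 : ∀ j, MemLp (fun ω => X ω j) 2 P)
    (hℓL2 : MemLp (fun ω => ℓ (S ω)) 2 P) (hℓ₀L2 : MemLp (fun ω => ℓ₀ (S ω)) 2 P)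
    (hmL2 : ∀ j, MemLp (fun ω => m (S ω) j) 2 P)
    (hm₀L2 : ∀ j, MemLp (fun ω => m₀ (S ω) j) 2 P) :
    ∀ r ∈ Set.Ioo (0 : ℝ) 1,
      iteratedDeriv 2 (fun r : ℝ => (WithLp.toLp 2 (fun j => ∫ ω,
          (Y ω - (ℓ₀ (S ω) + r * (ℓ (S ω) - ℓ₀ (S ω)))
            - ∑ k, (X ω k - (m₀ (S ω) k + r * (m (S ω) k - m₀ (S ω) k))) * β₀ k)
          * (X ω j - (m₀ (S ω) j + r * (m (S ω) j - m₀ (S ω) j))) ∂P) :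
          EuclideanSpace ℝ (Fin p))) r
        = (WithLp.toLp 2 (fun j =>
            2 * ∫ ω, (ℓ (S ω) - ℓ₀ (S ω)) * (m (S ω) j - m₀ (S ω) j) ∂P
              - 2 * ∫ ω, (m (S ω) j - m₀ (S ω) j)
                  * (∑ k, (m (S ω) k - m₀ (S ω) k) * β₀ k) ∂P) :
            EuclideanSpace ℝ (Fin p)) := by
  intro r _
  have hsumL2 : ∀ f g : Ω → Fin p → ℝ, (∀ k, MemLp (fun ω => f ω k) 2 P) →
      (∀ k, MemLp (fun ω => g ω k) 2 P) →
      MemLp (fun ω => ∑ k, (f ω k - g ω k) * β₀ k) 2 P := fun f g hf hg =>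
    memLp_finsetSum _ fun k _ => ((hf k).sub (hg k)).mul_const (β₀ k)
  have hA : MemLp (fun ω => Y ω - ℓ₀ (S ω) - ∑ k, (X ω k - m₀ (S ω) k) * β₀ k) 2 P :=
    (hYL2.sub hℓ₀L2).sub (hsumL2 X (fun ω => m₀ (S ω)) hXL2 hm₀L2)
  have hΔm : MemLp (fun ω => ∑ k, (m (S ω) k - m₀ (S ω) k) * β₀ k) 2 P :=
    hsumL2 (fun ω => m (S ω)) (fun ω => m₀ (S ω)) hmL2 hm₀L2
  have hB : MemLp (fun ω => ℓ (S ω) - ℓ₀ (S ω) - ∑ k, (m (S ω) k - m₀ (S ω) k) * β₀ k) 2 P :=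
    (hℓL2.sub hℓ₀L2).sub hΔm
  have hC : ∀ j, MemLp (fun ω => X ω j - m₀ (S ω) j) 2 P := fun j => (hXL2 j).sub (hm₀L2 j)
  have hD : ∀ j, MemLp (fun ω => m (S ω) j - m₀ (S ω) j) 2 P := fun j => (hmL2 j).sub (hm₀L2 j)
  -- two passes: `sub_add_eq_sub_sub` would otherwise break the first factor's pattern
  simp only [residual_along_segment_eq]
  simp only [sub_add_eq_sub_sub]
  rw [iteratedDeriv_two_integral_sub_mul_mul_sub_mul hA hB hC hD]
  ext j
  simp only [PiLp.smul_apply, smul_eq_mul]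
  rw [← mul_sub, ← integral_sub]
  · exact congrArg (2 * ·) (integral_congr_ae (Filter.Eventually.of_forall fun ω => by ring))
  · exact (hℓL2.sub hℓ₀L2).integrable_mul (hD j)
  · exact (hD j).integrable_mul hΔm

/-- Second-derivative computation: for
`f(r) = E[ψ(W; β₀, η₀ + r(η − η₀))]` with
`ψ(W; β, η) = (Y − ℓ(S) − (X − m(S))ᵀβ)(X − m(S))`, the second derivative in `r` equals
`2 E[(ℓ(S) − ℓ₀(S))(m(S) − m₀(S))] − 2 E[(m(S) − m₀(S))(m(S) − m₀(S))ᵀ β₀]`,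
independent of `r ∈ (0,1)`. -/
theorem stmt_13 {Ω : Type*} [MeasurableSpace Ω] (P : Measure Ω) [IsProbabilityMeasure P]
    (p d : ℕ) (Y : Ω → ℝ) (X : Ω → Fin p → ℝ) (S : Ω → Fin d → ℝ)
    (ℓ₀ ℓ : (Fin d → ℝ) → ℝ) (m₀ m : (Fin d → ℝ) → Fin p → ℝ) (β₀ : Fin p → ℝ)
    (hYL2 : MemLp Y 2 P) (hXL2 : ∀ j, MemLp (fun ω => X ω j) 2 P)
    (hℓL2 : MemLp (fun ω => ℓ (S ω)) 2 P) (hℓ₀L2 : MemLp (fun ω => ℓ₀ (S ω)) 2 P)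
    (hmL2 : ∀ j, MemLp (fun ω => m (S ω) j) 2 P)
    (hm₀L2 : ∀ j, MemLp (fun ω => m₀ (S ω) j) 2 P) :
    ∀ r ∈ Set.Ioo (0 : ℝ) 1,
      iteratedDeriv 2 (fun r : ℝ => (WithLp.toLp 2 (fun j => ∫ ω,
          (Y ω - (ℓ₀ (S ω) + r * (ℓ (S ω) - ℓ₀ (S ω)))
            - ∑ k, (X ω k - (m₀ (S ω) k + r * (m (S ω) k - m₀ (S ω) k))) * β₀ k)
          * (X ω j - (m₀ (S ω) j + r * (m (S ω) j - m₀ (S ω) j))) ∂P) :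
          EuclideanSpace ℝ (Fin p))) r
        = (WithLp.toLp 2 (fun j =>
            2 * ∫ ω, (ℓ (S ω) - ℓ₀ (S ω)) * (m (S ω) j - m₀ (S ω) j) ∂P
              - 2 * ∫ ω, (m (S ω) j - m₀ (S ω) j)
                  * (∑ k, (m (S ω) k - m₀ (S ω) k) * β₀ k) ∂P) :
            EuclideanSpace ℝ (Fin p)) :=
  stmt_13_general P p d Y X S ℓ₀ ℓ m₀ m β₀ hYL2 hXL2 hℓL2 hℓ₀L2 hmL2 hm₀L2
end
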